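/- (Quantization) Fix ε > 0 and x, y ∈ (0,1]. Define the quantized function h̃(x,y,ω) = h(x,y, (ε/16)·⌊16ω/ε⌋) (i.e., h evaluated at the largest grid point ω_i = ε·i/16 with ω_i ≤ ω, i ∈ ℤ). Then for all real a ≤ b: |∫_a^b h(x,y,ω)·κ(ω) dω − ∫_a^b h̃(x,y,ω)·κ(ω) dω| ≤ ε. -/

import Mathlib

open Real MeasureTheory

/-- The kernel integrand `h(x,y,ω)`. -/
noncomputable def h (x y ω : ℝ) : ℝ :=
  (Real.sqrt x * Real.cos (ω * Real.log x) - Real.sqrt y * Real.cos (ω * Real.log y)) ^ 2 +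
  (Real.sqrt x * Real.sin (ω * Real.log x) - Real.sqrt y * Real.sin (ω * Real.log y)) ^ 2

/-- Hyperbolic secant. -/
noncomputable def sech (t : ℝ) : ℝ := 2 / (Real.exp t + Real.exp (-t))

/-- The JS kernel density `κ(ω)`. -/
noncomputable def kJ (ω : ℝ) : ℝ := 2 * sech (Real.pi * ω) / (Real.log 4 * (1 + 4 * ω ^ 2))

/-- The χ² kernel density `κ_χ(ω)`. -/
noncomputable def kChi (ω : ℝ) : ℝ := sech (Real.pi * ω)

/-- One-dimensional Jensen–Shannon divergence (with `0·log 0 = 0`, `f_J(0,0) = 0`,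
which hold automatically since `Real.log 0 = 0` and `0/0 = 0` in Lean). -/
noncomputable def fJ (x y : ℝ) : ℝ :=
  x * Real.log (2 * x / (x + y)) + y * Real.log (2 * y / (x + y))

/-- One-dimensional symmetrized χ² divergence (with `f_χ(0,0) = 0`,
which holds automatically since `0/0 = 0` in Lean). -/
noncomputable def fChi (x y : ℝ) : ℝ := (x - y) ^ 2 / (x + y)

/-- One-dimensional Hellinger distance. -/
noncomputable def fH (x y : ℝ) : ℝ := (Real.sqrt x - Real.sqrt y) ^ 2

/-!
Writing `h(x,y,ω) = x + y - 2√x√y·cos(ω(log x - log y))` and using `√x·|log x| ≤ 2` on `(0,1]`,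
`h` is 4-Lipschitz in `ω`. The grid point lies within `ε/16` of `ω`, so the integrands differ by
at most `(ε/4)·κ(ω)`. Since `sech ≤ 1`, `∫ κ ≤ (2/log 4)·∫ dω/(1+4ω²) ≤ π/log 4`, and
`(ε/4)·π/log 4 ≤ ε` because `π ≤ 4 ≤ 4 log 4`.
-/

theorem sech_eq_inv_cosh (t : ℝ) : sech t = (cosh t)⁻¹ := by
  rw [sech, cosh_eq, inv_div]

theorem sech_nonneg (t : ℝ) : 0 ≤ sech t := by
  rw [sech_eq_inv_cosh]; exact inv_nonneg.2 (cosh_pos t).le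

theorem sech_le_one (t : ℝ) : sech t ≤ 1 := by
  rw [sech_eq_inv_cosh]; exact inv_le_one_of_one_le₀ (one_le_cosh t)

theorem one_le_log_four : 1 ≤ log 4 := by
  rw [le_log_iff_exp_le (by norm_num)]
  exact exp_one_lt_d9.le.trans (by norm_num)

theorem kJ_nonneg (ω : ℝ) : 0 ≤ kJ ω := by
  have := sech_nonneg (π * ω)
  have := one_le_log_four
  unfold kJ; positivity

theorem kJ_le (ω : ℝ) : kJ ω ≤ 2 / log 4 * (1 + (2 * ω) ^ 2)⁻¹ := by
  have hlog := one_le_log_four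
  calc kJ ω ≤ 2 * 1 / (log 4 * (1 + 4 * ω ^ 2)) := by
        unfold kJ; gcongr; exact sech_le_one _
    _ = 2 / log 4 * (1 + (2 * ω) ^ 2)⁻¹ := by field_simp; ring

theorem continuous_kJ : Continuous kJ := by
  have hcosh : Continuous fun ω => (cosh (π * ω))⁻¹ :=
    (by fun_prop : Continuous fun ω => cosh (π * ω)).inv₀ fun ω => (cosh_pos _).ne'
  have hden : ∀ ω : ℝ, log 4 * (1 + 4 * ω ^ 2) ≠ 0 := fun ω => by
    have := one_le_log_four; positivity
  unfold kJ
  simp only [sech_eq_inv_cosh]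
  exact (continuous_const.mul hcosh).div (by fun_prop) hden

theorem integral_inv_one_add_mul_sq_le {c : ℝ} (hc : 0 < c) (a b : ℝ) :
    ∫ x in a..b, (1 + (c * x) ^ 2)⁻¹ ≤ π / c := by
  rw [intervalIntegral.integral_comp_mul_left (fun x => (1 + x ^ 2)⁻¹) hc.ne',
    integral_inv_one_add_sq, smul_eq_mul, inv_mul_eq_div]
  gcongr
  linarith [arctan_lt_pi_div_two (c * b), neg_pi_div_two_lt_arctan (c * a)]

theorem integral_kJ_le {a b : ℝ} (hab : a ≤ b) : ∫ ω in a..b, kJ ω ≤ π / log 4 := by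
  have hcont : Continuous fun ω : ℝ => (1 + (2 * ω) ^ 2)⁻¹ :=
    (by fun_prop : Continuous fun ω : ℝ => 1 + (2 * ω) ^ 2).inv₀ fun ω => by positivity
  calc ∫ ω in a..b, kJ ω ≤ ∫ ω in a..b, 2 / log 4 * (1 + (2 * ω) ^ 2)⁻¹ :=
        intervalIntegral.integral_mono_on hab (continuous_kJ.intervalIntegrable a b)
          ((hcont.intervalIntegrable a b).const_mul _) fun ω _ => kJ_le ω
    _ ≤ 2 / log 4 * (π / 2) := by
        rw [intervalIntegral.integral_const_mul]
        have := one_le_log_four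
        gcongr
        exact integral_inv_one_add_mul_sq_le two_pos a b
    _ = π / log 4 := by ring

theorem h_eq_sub_cos {x y : ℝ} (hx : 0 ≤ x) (hy : 0 ≤ y) (ω : ℝ) :
    h x y ω = x + y - 2 * (√x * √y) * cos (ω * (log x - log y)) := by
  have hA := sin_sq_add_cos_sq (ω * log x)
  have hB := sin_sq_add_cos_sq (ω * log y)
  rw [h, mul_sub, cos_sub]
  linear_combination (√x) ^ 2 * hA + (√y) ^ 2 * hB + sq_sqrt hx + sq_sqrt hy

theorem neg_two_le_sqrt_mul_log {x : ℝ} (hx0 : 0 < x) (hx1 : x ≤ 1) : -2 ≤ √x * log x := by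
  have hs := abs_log_mul_self_lt (√x) (sqrt_pos.2 hx0) (sqrt_le_one.2 hx1)
  have hlog : log x = 2 * log √x := by rw [log_sqrt hx0.le]; ring
  rw [hlog]
  linarith [(abs_lt.1 hs).1]

theorem sqrt_mul_sqrt_mul_abs_log_sub_log_le {x y : ℝ} (hx : x ∈ Set.Ioc (0 : ℝ) 1)
    (hy : y ∈ Set.Ioc (0 : ℝ) 1) : √x * √y * |log x - log y| ≤ 2 := by
  have hu := neg_two_le_sqrt_mul_log hx.1 hx.2
  have hv := neg_two_le_sqrt_mul_log hy.1 hy.2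
  have hs0 := sqrt_nonneg x
  have ht0 := sqrt_nonneg y
  have hu' : √x * log x ≤ 0 := mul_nonpos_of_nonneg_of_nonpos hs0 (log_nonpos hx.1.le hx.2)
  have hv' : √y * log y ≤ 0 := mul_nonpos_of_nonneg_of_nonpos ht0 (log_nonpos hy.1.le hy.2)
  have hs := sqrt_le_one.2 hx.2
  have ht := sqrt_le_one.2 hy.2
  rw [← abs_of_nonneg (mul_nonneg hs0 ht0), ← abs_mul, abs_le]
  constructor <;> nlinarith

theorem lipschitzWith_h {x y : ℝ} (hx : x ∈ Set.Ioc (0 : ℝ) 1) (hy : y ∈ Set.Ioc (0 : ℝ) 1) :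
    LipschitzWith 4 (h x y) := by
  refine LipschitzWith.of_dist_le_mul fun ω₁ ω₂ => ?_
  set c := log x - log y
  simp only [Real.dist_eq, h_eq_sub_cos hx.1.le hy.1.le]
  calc |x + y - 2 * (√x * √y) * cos (ω₁ * c) - (x + y - 2 * (√x * √y) * cos (ω₂ * c))|
      = |2 * (√x * √y) * (cos (ω₂ * c) - cos (ω₁ * c))| := by congr 1; ring
    _ = 2 * (√x * √y) * |cos (ω₂ * c) - cos (ω₁ * c)| := by
        rw [abs_mul, abs_of_nonneg (by positivity)]
    _ ≤ 2 * (√x * √y) * |ω₂ * c - ω₁ * c| :=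
        mul_le_mul_of_nonneg_left (abs_cos_sub_cos_le _ _) (by positivity)
    _ = 2 * (√x * √y * |c|) * |ω₁ - ω₂| := by
        rw [← sub_mul, abs_mul, abs_sub_comm]; ring
    _ ≤ 2 * 2 * |ω₁ - ω₂| := by gcongr; exact sqrt_mul_sqrt_mul_abs_log_sub_log_le hx hy
    _ = ((4 : NNReal) : ℝ) * |ω₁ - ω₂| := by norm_num

theorem abs_sub_mul_floor_div_le {δ : ℝ} (hδ : 0 < δ) (ω : ℝ) : |ω - δ * ⌊ω / δ⌋| ≤ δ := by
  have hfract : ω - δ * ⌊ω / δ⌋ = δ * Int.fract (ω / δ) := by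
    rw [Int.fract, mul_sub, mul_div_cancel₀ _ hδ.ne']
  rw [hfract, abs_of_nonneg (mul_nonneg hδ.le (Int.fract_nonneg _))]
  exact mul_le_of_le_one_right hδ.le (Int.fract_lt_one _).le

theorem abs_integral_mul_sub_integral_comp_mul_le {f q κ : ℝ → ℝ} {L : NNReal} {δ a b : ℝ}
    (hf : LipschitzWith L f) (hq : Measurable q) (hqδ : ∀ ω, |ω - q ω| ≤ δ)
    (hκ : Continuous κ) (hκ0 : ∀ ω, 0 ≤ κ ω) (hab : a ≤ b) :
    |(∫ ω in a..b, f ω * κ ω) - ∫ ω in a..b, f (q ω) * κ ω| ≤ L * δ * ∫ ω in a..b, κ ω := by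
  have hpt : ∀ ω, |f ω * κ ω - f (q ω) * κ ω| ≤ L * δ * κ ω := fun ω => by
    rw [← sub_mul, abs_mul, abs_of_nonneg (hκ0 ω)]
    refine mul_le_mul_of_nonneg_right ?_ (hκ0 ω)
    calc |f ω - f (q ω)| ≤ L * |ω - q ω| := by
          simpa only [Real.dist_eq] using hf.dist_le_mul ω (q ω)
      _ ≤ L * δ := by gcongr; exact hqδ ω
  have hκi : IntervalIntegrable κ volume a b := hκ.intervalIntegrable a b
  have hfκ : IntervalIntegrable (fun ω => f ω * κ ω) volume a b :=
    (hf.continuous.mul hκ).intervalIntegrable a b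
  have hfqκ : IntervalIntegrable (fun ω => f (q ω) * κ ω) volume a b := by
    refine (hfκ.abs.add (hκi.const_mul (L * δ))).mono_fun'
      ((hf.continuous.measurable.comp hq).mul hκ.measurable).aestronglyMeasurable
      (ae_of_all _ fun ω => ?_)
    have := abs_sub_abs_le_abs_sub (f (q ω) * κ ω) (f ω * κ ω)
    rw [abs_sub_comm] at this
    simp only [Real.norm_eq_abs]
    linarith [hpt ω]
  rw [← intervalIntegral.integral_sub hfκ hfqκ, ← intervalIntegral.integral_const_mul]
  exact intervalIntegral.norm_integral_le_of_norm_le hab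
    (ae_of_all _ fun ω _ => (Real.norm_eq_abs _).trans_le (hpt ω)) (hκi.const_mul _)

/-- Quantization: replacing `ω` by the largest grid point
`ω_i = ε·i/16 ≤ ω` changes the integral by at most `ε`. -/
theorem js_quantization (ε : ℝ) (hε : 0 < ε)
    (x : ℝ) (hx : x ∈ Set.Ioc (0 : ℝ) 1) (y : ℝ) (hy : y ∈ Set.Ioc (0 : ℝ) 1)
    (a b : ℝ) (hab : a ≤ b) :
    |(∫ ω in a..b, h x y ω * kJ ω) -
      ∫ ω in a..b, h x y (ε / 16 * (⌊16 * ω / ε⌋ : ℤ)) * kJ ω| ≤ ε := by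
  have hgrid : ∀ ω, |ω - ε / 16 * (⌊16 * ω / ε⌋ : ℤ)| ≤ ε / 16 := fun ω => by
    have := abs_sub_mul_floor_div_le (show 0 < ε / 16 by positivity) ω
    rwa [div_div_eq_mul_div, mul_comm ω 16] at this
  have hmeas : Measurable fun ω : ℝ => ε / 16 * (⌊16 * ω / ε⌋ : ℤ) := by fun_prop
  have hpi : π ≤ 4 * log 4 := by linarith [pi_le_four, one_le_log_four]
  have hlog : 0 < log 4 := by linarith [one_le_log_four]
  calc _ ≤ (4 : NNReal) * (ε / 16) * ∫ ω in a..b, kJ ω :=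
        abs_integral_mul_sub_integral_comp_mul_le (lipschitzWith_h hx hy) hmeas hgrid
          continuous_kJ kJ_nonneg hab
    _ ≤ 4 * (ε / 16) * (π / log 4) := by push_cast; gcongr; exact integral_kJ_le hab
    _ ≤ ε := by
        rw [mul_div_assoc', div_le_iff₀ hlog]; nlinarith
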